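/- Let (φ,ξ,η,g) be an almost contact metric structure induced by a G₂ structure, with local orthonormal frame {e₁,…,e₆,ξ}. Then (∇_{e_i}Φ)(φe_i, ξ) = g(ξ, ∇_{e_i}e_i) for each i, and i₁₄(∇Φ) := Σ_{i,j}(∇_{e_i}Φ)(φe_i,ξ)·(∇_{e_j}Φ)(φe_j,ξ) = (div ξ)². In particular i₁₄(∇Φ) = 0 if and only if div ξ = 0. -/

import Mathlib

/-! Because `ξ × ξ = 0`, only the last term of `(∇_xΦ)(ξ × x, ξ)` survives, and since `ξ ×` is
an isometry on `ξ^⊥` it equals `-⟪x, ∇_x ξ⟫ = ⟪ξ, ∇_x x⟫` by metric compatibility. Summing over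
the frame gives `-div ξ` (the `ξ`-term of the divergence vanishes as `|ξ| = 1`), and `i₁₄` is the
square of that sum. -/

open scoped RealInnerProductSpace

lemma cross_self_eq_zero {M : Type*} [AddCommGroup M] [Module ℝ M] {cross : M → M → M}
    (hanti : ∀ x y : M, cross x y = - cross y x) (x : M) : cross x x = 0 := by
  have h : (2 : ℝ) • cross x x = 0 := by
    rw [two_smul]
    nth_rewrite 2 [hanti]
    exact add_neg_cancel _
  exact (smul_eq_zero.mp h).resolve_left two_ne_zero

section

variable {V : Type*} [NormedAddCommGroup V] [InnerProductSpace ℝ V]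

lemma orthonormal_snoc_last {n : ℕ} {e : Fin n → V} {ξ : V}
    (hON : Orthonormal ℝ (Fin.snoc e ξ : Fin (n + 1) → V)) :
    ⟪ξ, ξ⟫ = 1 ∧ ∀ i, ⟪ξ, e i⟫ = 0 := by
  refine ⟨?_, fun i => ?_⟩
  · have h := hON.1 (Fin.last n)
    rw [Fin.snoc_last] at h
    rw [real_inner_self_eq_norm_sq, h, one_pow]
  · simpa using hON.2 (Fin.castSucc_lt_last i).ne'

lemma inner_left_eq_neg_of_deriv_eq_zero {nabla : V → V → V} {D : V → ℝ → ℝ}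
    (hDg : ∀ x y z : V, D x ⟪y, z⟫ = ⟪nabla x y, z⟫ + ⟪y, nabla x z⟫) {x y z : V}
    (h : D x ⟪y, z⟫ = 0) : ⟪nabla x y, z⟫ = -⟪y, nabla x z⟫ := by
  linarith [hDg x y z]

variable {cross : V → V → V} {ξ : V}

lemma inner_cross_cross (hskew : ∀ x y z : V, ⟪cross x y, z⟫ = - ⟪cross x z, y⟫)
    (hdouble : ∀ x : V, cross ξ (cross ξ x) = -x + ⟪ξ, x⟫ • ξ) (x y : V) :
    ⟪cross ξ x, cross ξ y⟫ = ⟪x, y⟫ - ⟪ξ, x⟫ * ⟪ξ, y⟫ := by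
  rw [hskew, hdouble, inner_add_left, inner_neg_left, real_inner_smul_left,
    real_inner_comm x y]
  ring

lemma nablaPhi_cross_self_eq_inner_nabla {nabla : V → V → V} {D : V → ℝ → ℝ}
    {Φ : V → V → ℝ} {nablaPhi : V → V → V → ℝ}
    (hskew : ∀ x y z : V, ⟪cross x y, z⟫ = - ⟪cross x z, y⟫)
    (hdouble : ∀ x : V, cross ξ (cross ξ x) = -x + ⟪ξ, x⟫ • ξ) (hξξ : cross ξ ξ = 0)
    (hD0 : ∀ x, D x 0 = 0)
    (hDg : ∀ x y z : V, D x ⟪y, z⟫ = ⟪nabla x y, z⟫ + ⟪y, nabla x z⟫)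
    (hΦ : ∀ x y, Φ x y = ⟪x, cross ξ y⟫)
    (hnablaPhi : ∀ x y z, nablaPhi x y z = D x (Φ y z) - Φ (nabla x y) z - Φ y (nabla x z))
    {x : V} (hx : ⟪ξ, x⟫ = 0) :
    nablaPhi x (cross ξ x) ξ = ⟪ξ, nabla x x⟫ := by
  have hmetric : ⟪nabla x x, ξ⟫ = -⟪x, nabla x ξ⟫ :=
    inner_left_eq_neg_of_deriv_eq_zero hDg (by rw [real_inner_comm, hx, hD0])
  rw [hnablaPhi, hΦ, hΦ, hΦ, hξξ, inner_zero_right, inner_zero_right, hD0,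
    inner_cross_cross hskew hdouble, hx, zero_mul]
  linarith [real_inner_comm ξ (nabla x x), real_inner_comm x (nabla x ξ)]

end

/-- For the almost contact metric structure induced by a G₂ structure,
with local orthonormal frame `{e₁,…,e₆,ξ}`, `(∇_{e_i}Φ)(φe_i, ξ) = g(ξ, ∇_{e_i}e_i)`
for each `i`, and `i₁₄(∇Φ) = Σ_{i,j}(∇_{e_i}Φ)(φe_i,ξ)·(∇_{e_j}Φ)(φe_j,ξ) = (div ξ)²`;
in particular `i₁₄(∇Φ) = 0 ↔ div ξ = 0`. -/
theorem i14_eq_div_sq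
    {V : Type*} [NormedAddCommGroup V] [InnerProductSpace ℝ V]
    (cross : V → V → V)
    (hanti : ∀ x y : V, cross x y = - cross y x)
    (hskew : ∀ x y z : V, ⟪cross x y, z⟫ = - ⟪cross x z, y⟫)
    (nabla : V → V → V) (D : V → ℝ → ℝ)
    (hD0 : ∀ x, D x 0 = 0) (hD1 : ∀ x, D x 1 = 0)
    (hDg : ∀ x y z : V, D x ⟪y, z⟫ = ⟪nabla x y, z⟫ + ⟪y, nabla x z⟫)
    (ξ : V) (e : Fin 6 → V)
    (hON : Orthonormal ℝ (Fin.snoc e ξ : Fin 7 → V))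
    -- `ξ × (ξ × x) = -x + ⟨ξ,x⟩ξ`:
    (hdouble : ∀ x : V, cross ξ (cross ξ x) = -x + ⟪ξ, x⟫ • ξ)
    (Φ : V → V → ℝ) (hΦ : ∀ x y, Φ x y = ⟪x, cross ξ y⟫)
    (nablaPhi : V → V → V → ℝ)
    (hnablaPhi : ∀ x y z, nablaPhi x y z
      = D x (Φ y z) - Φ (nabla x y) z - Φ y (nabla x z))
    (divξ : ℝ)
    (hdiv : divξ = (∑ i : Fin 6, ⟪nabla (e i) ξ, e i⟫) + ⟪nabla ξ ξ, ξ⟫) :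
    (∀ i, nablaPhi (e i) (cross ξ (e i)) ξ = ⟪ξ, nabla (e i) (e i)⟫) ∧
    (∑ i : Fin 6, ∑ j : Fin 6,
        nablaPhi (e i) (cross ξ (e i)) ξ * nablaPhi (e j) (cross ξ (e j)) ξ
      = divξ ^ 2) ∧
    ((∑ i : Fin 6, ∑ j : Fin 6,
        nablaPhi (e i) (cross ξ (e i)) ξ * nablaPhi (e j) (cross ξ (e j)) ξ = 0) ↔
      divξ = 0) := by
  obtain ⟨hξξ, hξe⟩ := orthonormal_snoc_last hON
  have hpoint : ∀ i, nablaPhi (e i) (cross ξ (e i)) ξ = ⟪ξ, nabla (e i) (e i)⟫ := fun i =>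
    nablaPhi_cross_self_eq_inner_nabla hskew hdouble (cross_self_eq_zero hanti ξ) hD0 hDg hΦ
      hnablaPhi (hξe i)
  have hunit : ⟪nabla ξ ξ, ξ⟫ = 0 := by
    have h := inner_left_eq_neg_of_deriv_eq_zero hDg (x := ξ) (y := ξ) (z := ξ)
      (by rw [hξξ, hD1])
    linarith [real_inner_comm ξ (nabla ξ ξ)]
  have hdiv_eq : divξ = -∑ i, ⟪ξ, nabla (e i) (e i)⟫ := by
    rw [hdiv, hunit, add_zero, ← Finset.sum_neg_distrib]
    exact Finset.sum_congr rfl fun i _ =>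
      inner_left_eq_neg_of_deriv_eq_zero hDg (by rw [hξe i, hD0])
  have hsq : ∑ i : Fin 6, ∑ j : Fin 6,
      nablaPhi (e i) (cross ξ (e i)) ξ * nablaPhi (e j) (cross ξ (e j)) ξ = divξ ^ 2 := by
    simp_rw [hpoint]
    rw [← Finset.sum_mul_sum, hdiv_eq]
    ring
  exact ⟨hpoint, hsq, by rw [hsq, pow_eq_zero_iff two_ne_zero]⟩
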